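/- arXiv:2306.04831 — 4 statements merged into one kernel-verified Lean document; each statement's English description precedes it below -/
import Mathlib

section
/- Let $V,W$ be finite-dimensional complex vector spaces and $A,B:V\to W$ linear maps, and suppose $\operatorname{rk} A = \max_{\lambda\in\mathbb{C}} \operatorname{rk}(A+\lambda B)$. Then for every $u_0\in \ker A$ there exist vectors $u_1,\dots,u_l\in V$ such that the polynomial $u(\lambda)=\sum_{j=0}^l u_j\lambda^j$ satisfies $(A+\lambda B)u(\lambda)=0$ identically in $\lambda$. -/
open LinearMap

lemma exists_gi {V W : Type*} [AddCommGroup V] [Module ℂ V] [AddCommGroup W] [Module ℂ W]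
    (A : V →ₗ[ℂ] W) : ∃ G : W →ₗ[ℂ] V, ∀ v, A (G (A v)) = A v := by
  obtain ⟨σ, hσ⟩ := A.rangeRestrict.exists_rightInverse_of_surjective
    (LinearMap.range_eq_top.2 A.surjective_rangeRestrict)
  obtain ⟨π, hπ⟩ := (LinearMap.range A).subtype.exists_leftInverse_of_injective
    (LinearMap.range A).ker_subtype
  refine ⟨σ.comp π, fun v => ?_⟩
  have h1 : π (A v) = ⟨A v, LinearMap.mem_range_self A v⟩ := by
    have := LinearMap.congr_fun hπ ⟨A v, LinearMap.mem_range_self A v⟩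
    simpa using this
  have h2 : ∀ x : LinearMap.range A, A (σ x) = (x : W) := by
    intro x
    have := LinearMap.congr_fun hσ x
    simpa [LinearMap.rangeRestrict, Subtype.ext_iff] using this
  simp [h1, h2]

open LinearMap Module

lemma finrank_map_eq_of_injOn {V W : Type*} [AddCommGroup V] [Module ℂ V] [AddCommGroup W]
    [Module ℂ W] (f : V →ₗ[ℂ] W) (p : Submodule ℂ V)
    (h : ∀ x ∈ p, f x = 0 → x = 0) :
    finrank ℂ (Submodule.map f p) = finrank ℂ p := by
  have hinj : Function.Injective (f.domRestrict p) := by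
    rw [← LinearMap.ker_eq_bot, LinearMap.ker_eq_bot']
    rintro ⟨x, hx⟩ hfx
    simp only [LinearMap.domRestrict_apply] at hfx
    exact Subtype.ext (h x hx hfx)
  have h2 := LinearEquiv.finrank_eq (LinearEquiv.ofInjective _ hinj)
  rw [← LinearMap.range_domRestrict]
  exact h2.symm

lemma key_lemma {V W : Type*} [AddCommGroup V] [Module ℂ V] [AddCommGroup W] [Module ℂ W]
    [FiniteDimensional ℂ V] [FiniteDimensional ℂ W]
    (A B : V →ₗ[ℂ] W)
    (hmax : ∀ lam : ℂ, LinearMap.rank (A + lam • B) ≤ LinearMap.rank A)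
    (G : W →ₗ[ℂ] V) (hG : ∀ v, A (G (A v)) = A v)
    (lam : ℂ) (M : V →ₗ[ℂ] V) (hM : M = LinearMap.id + lam • (G ∘ₗ B))
    (hbij : Function.Bijective M)
    (v : V) (hv : A (M v) = 0) :
    (A + lam • B) v = 0 := by
  by_contra hs
  set P : V →ₗ[ℂ] W := A + lam • B with hP
  set s : W := P v with hsdef
  have hAv : A v = -(lam • A (G (B v))) := by
    have : A (M v) = A v + lam • A (G (B v)) := by
      simp [hM, map_add, map_smul]
    rw [this] at hv
    linear_combination (norm := module) hv
  have hs_eq : s = lam • (B v - A (G (B v))) := by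
    simp only [hsdef, hP, LinearMap.add_apply, LinearMap.smul_apply, hAv]
    module
  have hAGs : A (G s) = 0 := by
    rw [hs_eq]
    rw [map_smul, map_smul, map_sub, map_sub, hG (G (B v))]
    simp
  set V₁ : Submodule ℂ V := LinearMap.range (G ∘ₗ A) with hV₁
  set r : ℕ := finrank ℂ (LinearMap.range A) with hr
  have hAinjV₁ : ∀ x ∈ V₁, A x = 0 → x = 0 := by
    rintro x ⟨y, rfl⟩ hx
    simp only [LinearMap.comp_apply] at hx ⊢
    rw [hG y] at hx
    rw [hx, map_zero]
  have hV₁rank : finrank ℂ V₁ = r := by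
    have h1 : V₁ = Submodule.map G (LinearMap.range A) := by
      rw [hV₁, LinearMap.range_comp]
    rw [h1, finrank_map_eq_of_injOn]
    rintro x ⟨y, rfl⟩ hx
    have h2 : A (G (A y)) = 0 := by rw [hx, map_zero]
    rw [hG y] at h2
    simp [h2]
  set U : Submodule ℂ V := Submodule.comap M V₁ with hU
  have hMinj : ∀ x ∈ U, M x = 0 → x = 0 := fun x _ hx => hbij.injective (by simpa using hx)
  have hUmap : Submodule.map M U = V₁ := by
    apply le_antisymm
    · rintro _ ⟨x, hx, rfl⟩; exact hx
    · intro y hy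
      obtain ⟨x, hxy⟩ := hbij.surjective y
      exact ⟨x, by simpa [hU, Submodule.mem_comap, hxy] using hy, hxy⟩
  have hUrank : finrank ℂ U = r := by
    rw [← hV₁rank, ← hUmap, finrank_map_eq_of_injOn M U hMinj]
  have hc : ∀ x, A (G (P x)) = A (M x) := by
    intro x
    have h1 : A (G (P x)) = A (G (A x)) + lam • A (G (B x)) := by
      simp [hP, map_add, map_smul]
    rw [h1, hG x, hM]
    simp [map_add, map_smul]
  have hPinjU : ∀ x ∈ U, P x = 0 → x = 0 := by
    intro x hx hPx
    have h1 : A (M x) = 0 := by rw [← hc x, hPx, map_zero, map_zero]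
    exact hMinj x hx (hAinjV₁ (M x) hx h1)
  set T : Submodule ℂ W := Submodule.map P U with hT
  have hTrank : finrank ℂ T = r := by rw [hT, finrank_map_eq_of_injOn P U hPinjU, hUrank]
  have hTdisj : ∀ t ∈ T, A (G t) = 0 → t = 0 := by
    rintro _ ⟨x, hx, rfl⟩ h0
    rw [hc x] at h0
    have hx0 : x = 0 := hMinj x hx (hAinjV₁ (M x) hx h0)
    rw [hx0, map_zero]
  have hinf : T ⊓ Submodule.span ℂ {s} = ⊥ := by
    rw [eq_bot_iff]
    rintro x ⟨hxT, hxs⟩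
    obtain ⟨c, rfl⟩ := Submodule.mem_span_singleton.mp hxs
    have : A (G (c • s)) = 0 := by rw [map_smul, map_smul, hAGs, smul_zero]
    simpa using hTdisj _ hxT this
  have hspan : finrank ℂ (T ⊔ Submodule.span ℂ {s} : Submodule ℂ W) = r + 1 := by
    have h1 := Submodule.finrank_sup_add_finrank_inf_eq T (Submodule.span ℂ {s})
    rw [hinf] at h1
    rw [finrank_span_singleton hs, hTrank] at h1
    simpa using h1
  have hle : T ⊔ Submodule.span ℂ {s} ≤ LinearMap.range P := by
    apply sup_le
    · rintro x hx
      obtain ⟨y, _, rfl⟩ := hx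
      exact ⟨y, rfl⟩
    · rw [Submodule.span_le, Set.singleton_subset_iff]
      exact ⟨v, rfl⟩
  have hge : r + 1 ≤ finrank ℂ (LinearMap.range P) := hspan ▸ Submodule.finrank_mono hle
  have hrk : (finrank ℂ (LinearMap.range P) : Cardinal) ≤ (finrank ℂ (LinearMap.range A) : Cardinal) := by
    rw [finrank_eq_rank, finrank_eq_rank]
    exact hmax lam
  have : finrank ℂ (LinearMap.range P) ≤ r := by exact_mod_cast hrk
  omega
open Polynomial Module

/-- Polynomial solutions in the kernel of a pencil: if `rank A` is maximal in the
pencil `A + λ B`, then every `u₀ ∈ ker A` extends to a polynomial solution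
`u(λ) = Σ uⱼ λʲ` of `(A + λ B) u(λ) = 0`, i.e. `A u₀ = 0`,
`A uⱼ + B u_{j-1} = 0` for `1 ≤ j ≤ l`, and `B u_l = 0`. -/
theorem stmt_0 {V W : Type*} [AddCommGroup V] [Module ℂ V] [AddCommGroup W] [Module ℂ W]
    [FiniteDimensional ℂ V] [FiniteDimensional ℂ W]
    (A B : V →ₗ[ℂ] W)
    (hmax : ∀ lam : ℂ, LinearMap.rank (A + lam • B) ≤ LinearMap.rank A) :
    ∀ u₀ ∈ LinearMap.ker A, ∃ (l : ℕ) (u : ℕ → V),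
      u 0 = u₀ ∧
      (∀ j, 1 ≤ j → j ≤ l → A (u j) + B (u (j - 1)) = 0) ∧
      B (u l) = 0 := by
  classical
  intro u₀ hu₀
  rw [LinearMap.mem_ker] at hu₀
  obtain ⟨G, hG⟩ := exists_gi A
  set bV := Module.finBasis ℂ V with hbV
  set bW := Module.finBasis ℂ W with hbW
  set MF := LinearMap.toMatrix bV bV (G ∘ₗ B) with hMF
  set MA := LinearMap.toMatrix bV bW A with hMA
  set MB := LinearMap.toMatrix bV bW B with hMB
  set D : Matrix _ _ ℂ[X] := 1 + (X : ℂ[X]) • (MF.map C) with hD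
  set q : ℂ[X] := D.det with hq
  set Zm := D.adjugate with hZm
  set x₀ : _ → ℂ := ⇑(bV.repr u₀) with hx₀
  set pvec : _ → ℂ[X] := Zm.mulVec (fun i => C (x₀ i)) with hpvec
  set u : ℕ → V := fun j => bV.equivFun.symm (fun i => (pvec i).coeff j) with hu
  have hrepru : ∀ j, ⇑(bV.repr (u j)) = fun i => (pvec i).coeff j := by
    intro j
    rw [hu]
    have := bV.equivFun_apply (bV.equivFun.symm (fun i => (pvec i).coeff j))
    rw [LinearEquiv.apply_symm_apply] at this
    exact this.symm
  -- evaluation of D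
  have hDmap : ∀ lam : ℂ, D.map (eval lam) = 1 + lam • MF := by
    intro lam
    rw [hD]
    ext i j
    simp only [Matrix.map_apply, Matrix.add_apply, Matrix.smul_apply, smul_eq_mul, eval_add,
      eval_mul, eval_X, eval_C, Matrix.one_apply, apply_ite (eval lam), eval_one, eval_zero]
  have hZmap : ∀ lam : ℂ, Zm.map (eval lam) = (1 + lam • MF).adjugate := by
    intro lam
    have h1 := RingHom.map_adjugate (evalRingHom lam) D
    simp only [RingHom.mapMatrix_apply, coe_evalRingHom] at h1
    rw [hZm, h1, hDmap]
  have hqeval : ∀ lam : ℂ, q.eval lam = (1 + lam • MF).det := by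
    intro lam
    have h1 := RingHom.map_det (evalRingHom lam) D
    simp only [RingHom.mapMatrix_apply, coe_evalRingHom] at h1
    rw [hq, h1, hDmap]
  have hq0 : q.eval 0 = 1 := by rw [hqeval]; simp
  have hqne : q ≠ 0 := fun h => by simp [h] at hq0
  -- evaluation of pvec
  have hpeval : ∀ lam : ℂ, (fun i => (pvec i).eval lam)
      = ((1 + lam • MF).adjugate).mulVec x₀ := by
    intro lam
    funext i
    rw [hpvec, ← hZmap lam]
    simp [Matrix.mulVec, dotProduct, Matrix.map_apply, eval_finset_sum]
  -- the polynomial identity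
  set g : _ → ℂ[X] := fun k => ∑ i, (C (MA k i) + X * C (MB k i)) * pvec i with hg
  have hgzero : ∀ k, g k = 0 := by
    intro k
    apply Polynomial.eq_zero_of_infinite_isRoot
    apply Set.Infinite.mono (s := {lam : ℂ | q.eval lam ≠ 0})
    · intro lam hlam
      -- main evaluation computation
      set Mmat : Matrix _ _ ℂ := 1 + lam • MF with hMmat
      have hdet : Mmat.det ≠ 0 := by rw [← hqeval]; exact hlam
      set Mlin : V →ₗ[ℂ] V := LinearMap.id + lam • (G ∘ₗ B) with hMlin
      have hMlinmat : LinearMap.toMatrix bV bV Mlin = Mmat := by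
        rw [hMlin, hMmat, map_add, LinearMap.toMatrix_id, map_smul, hMF]
      have hdet' : LinearMap.det Mlin ≠ 0 := by
        rw [← LinearMap.det_toMatrix bV, hMlinmat]; exact hdet
      have hbij : Function.Bijective Mlin := (Mlin.equivOfDetNeZero hdet').bijective
      set pe : _ → ℂ := fun i => (pvec i).eval lam with hpe
      set v : V := bV.equivFun.symm pe with hv
      have hreprv : ⇑(bV.repr v) = pe := by
        rw [hv]
        have := bV.equivFun_apply (bV.equivFun.symm pe)
        rw [LinearEquiv.apply_symm_apply] at this
        exact this.symm
      -- M v = q(lam) • u₀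
      have hMv : Mlin v = q.eval lam • u₀ := by
        apply bV.repr.injective
        apply DFunLike.coe_injective
        have h1 := LinearMap.toMatrix_mulVec_repr bV bV Mlin v
        calc ⇑(bV.repr (Mlin v)) = (LinearMap.toMatrix bV bV Mlin).mulVec ⇑(bV.repr v) := by
              rw [← h1]
          _ = Mmat.mulVec (Matrix.mulVec Mmat.adjugate x₀) := by
              rw [hMlinmat, hreprv, hpe, hpeval lam, hMmat]
          _ = (Mmat.det • (1 : Matrix _ _ ℂ)).mulVec x₀ := by
              rw [Matrix.mulVec_mulVec, Matrix.mul_adjugate]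
          _ = q.eval lam • x₀ := by
              rw [hqeval lam, ← hMmat, Matrix.smul_mulVec, Matrix.one_mulVec]
          _ = ⇑(bV.repr (q.eval lam • u₀)) := by
              rw [map_smul, hx₀]; rfl
      have hAMv : A (Mlin v) = 0 := by rw [hMv, map_smul, hu₀, smul_zero]
      have hkey := key_lemma A B hmax G hG lam Mlin hMlin hbij v hAMv
      -- now evaluate g k at lam
      show eval lam (g k) = 0
      have h2 := LinearMap.toMatrix_mulVec_repr bV bW (A + lam • B) v
      have h3 : ⇑(bW.repr ((A + lam • B) v)) = 0 := by rw [hkey]; simp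
      have h4 : (LinearMap.toMatrix bV bW (A + lam • B)).mulVec ⇑(bV.repr v) = 0 := by
        rw [h2]; exact h3
      have h5 : ((MA + lam • MB).mulVec pe) k = 0 := by
        rw [← hreprv, hMA, hMB, ← map_smul, ← map_add, h4]; rfl
      rw [hg]
      simp only [eval_finset_sum, eval_mul, eval_add, eval_C, eval_mul, eval_X]
      rw [← h5]
      simp [Matrix.mulVec, dotProduct, Matrix.add_apply, Matrix.smul_apply, hpe,
        mul_comm]
    · have hfin : {lam : ℂ | q.eval lam = 0}.Finite := Polynomial.finite_setOf_isRoot hqne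
      have := hfin.infinite_compl
      convert this using 1
      rfl
  -- extract coefficients
  set l : ℕ := (Finset.univ.sup fun i => (pvec i).natDegree) + 1 with hl
  refine ⟨l, u, ?_, ?_, ?_⟩
  · -- u 0 = u₀
    rw [hu]
    rw [LinearEquiv.symm_apply_eq]
    funext i
    rw [Polynomial.coeff_zero_eq_eval_zero]
    have h6 : (pvec i).eval 0 = (((1 + (0:ℂ) • MF).adjugate).mulVec x₀) i := congrFun (hpeval 0) i
    rw [h6]
    simp [hx₀, Matrix.adjugate_one, Matrix.one_mulVec, bV.equivFun_apply]
  · -- chain condition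
    intro j hj1 _
    obtain ⟨j', rfl⟩ : ∃ j', j = j' + 1 := ⟨j - 1, (Nat.succ_pred_eq_of_pos hj1).symm⟩
    have hj'1 : j' + 1 - 1 = j' := by omega
    have hcoeff : ∀ k, (MA.mulVec (fun i => (pvec i).coeff (j' + 1))) k
        + (MB.mulVec (fun i => (pvec i).coeff j')) k = 0 := by
      intro k
      have h0 := congrArg (fun p => Polynomial.coeff p (j' + 1)) (hgzero k)
      simp only [hg, Polynomial.coeff_zero] at h0
      rw [Polynomial.finset_sum_coeff] at h0
      have hterm : ∀ i, ((C (MA k i) + X * C (MB k i)) * pvec i).coeff (j' + 1)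
          = MA k i * (pvec i).coeff (j' + 1) + MB k i * (pvec i).coeff j' := by
        intro i
        rw [add_mul, Polynomial.coeff_add, Polynomial.coeff_C_mul, mul_assoc,
          Polynomial.coeff_X_mul, Polynomial.coeff_C_mul]
      rw [Finset.sum_congr rfl (fun i _ => hterm i)] at h0
      simpa [Matrix.mulVec, dotProduct, Finset.sum_add_distrib] using h0
    have hW : bW.repr (A (u (j' + 1)) + B (u (j' + 1 - 1))) = 0 := by
      ext k
      rw [map_add, Finsupp.add_apply]
      have hA1 := congrFun (LinearMap.toMatrix_mulVec_repr bV bW A (u (j' + 1))) k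
      have hB1 := congrFun (LinearMap.toMatrix_mulVec_repr bV bW B (u (j' + 1 - 1))) k
      rw [← hA1, ← hB1, hrepru (j' + 1), hrepru (j' + 1 - 1), hj'1]
      simpa [hMA, hMB] using hcoeff k
    exact bW.repr.map_eq_zero_iff.mp (by simpa using hW)
  · -- B (u l) = 0
    have hul : u l = 0 := by
      have hz : (fun i => (pvec i).coeff l) = (0 : Fin (Module.finrank ℂ V) → ℂ) := by
        funext i
        apply Polynomial.coeff_eq_zero_of_natDegree_lt
        calc (pvec i).natDegree ≤ Finset.univ.sup fun i => (pvec i).natDegree :=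
              Finset.le_sup (f := fun i => (pvec i).natDegree) (Finset.mem_univ i)
          _ < l := by rw [hl]; omega
      rw [hu]
      show bV.equivFun.symm _ = 0
      rw [hz]
      exact map_zero _
    rw [hul, map_zero]
end

section
/- Let $Q\in\operatorname{Mat}_{2n\times 2n}(\mathbb{C})$ be a skew-symmetric matrix of rank $2k$. Then the stabilizer $\operatorname{St}_Q = \{X\in\mathfrak{gl}(2n,\mathbb{C}) : XQ + QX^T = 0\}$ has dimension $k(2k+1) + 2n(2n-2k)$. -/
open Matrix

namespace Stmt9Aux

open Submodule LinearMap Module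

/-- The submodule of symmetric matrices. -/
noncomputable def symSub (ι : Type*) : Submodule ℂ (Matrix ι ι ℂ) where
  carrier := {M | Mᵀ = M}
  add_mem' := by intro a b ha hb; simp_all [Matrix.transpose_add]
  zero_mem' := by simp
  smul_mem' := by intro c a ha; simp_all [Matrix.transpose_smul]

lemma mem_symSub {ι : Type*} {M : Matrix ι ι ℂ} : M ∈ symSub ι ↔ Mᵀ = M := Iff.rfl

/-- Rank–nullity for preimage of a submodule. -/
lemma finrank_comap_eq {V : Type*} [AddCommGroup V] [Module ℂ V] [FiniteDimensional ℂ V]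
    (f : V →ₗ[ℂ] V) (W : Submodule ℂ V) :
    finrank ℂ (W.comap f) = finrank ℂ (ker f) + finrank ℂ (W ⊓ range f : Submodule ℂ V) := by
  have h1 := LinearMap.finrank_range_add_finrank_ker (f.domRestrict (W.comap f))
  rw [LinearMap.range_domRestrict, Submodule.map_comap_eq, LinearMap.ker_domRestrict] at h1
  have hle : ker f ≤ W.comap f := by
    intro x hx
    simp only [Submodule.mem_comap, LinearMap.mem_ker.mp hx, Submodule.zero_mem]
  have h2 : finrank ℂ ((ker f).comap (W.comap f).subtype) = finrank ℂ (ker f) :=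
    (Submodule.comapSubtypeEquivOfLe hle).finrank_eq
  rw [h2] at h1
  rw [← h1, inf_comm, Nat.add_comm]

/-- A matrix factors through `W` iff all its columns lie in the range of `W.mulVecLin`. -/
lemma exists_factor {a b c : Type*} [Fintype a] [Fintype b] [Fintype c]
    (W : Matrix a b ℂ) (M : Matrix a c ℂ) :
    (∃ C : Matrix b c ℂ, W * C = M) ↔
      ∀ j, (fun i => M i j) ∈ LinearMap.range W.mulVecLin := by
  constructor
  · rintro ⟨C, rfl⟩ j
    exact ⟨fun l => C l j, by ext i; simp [Matrix.mulVecLin_apply, Matrix.mulVec, Matrix.mul_apply,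
      dotProduct]⟩
  · intro h
    choose y hy using h
    refine ⟨Matrix.of fun i j => y j i, ?_⟩
    ext i j
    have := congrFun (hy j) i
    simpa [Matrix.mulVecLin_apply, Matrix.mulVec, Matrix.mul_apply, dotProduct] using this

/-- Counting: the dimension of symmetric `r × r` matrices, doubled. -/
lemma finrank_symSub_mul_two (r : ℕ) :
    finrank ℂ (symSub (Fin r)) * 2 = r * (r + 1) := by
  classical
  -- linear equiv to functions on pairs (i,j) with i ≤ j
  let ψ : symSub (Fin r) →ₗ[ℂ] ({p : Fin r × Fin r // p.1 ≤ p.2} → ℂ) :=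
    { toFun := fun M p => (M : Matrix (Fin r) (Fin r) ℂ) p.1.1 p.1.2
      map_add' := fun a b => rfl
      map_smul' := fun c a => rfl }
  have hinj : Function.Injective ψ := by
    intro M N h
    ext i j
    rcases le_total i j with hij | hij
    · exact congrFun h ⟨(i, j), hij⟩
    · have hM : (M : Matrix (Fin r) (Fin r) ℂ) j i = (M : Matrix _ _ ℂ) i j :=
        congrFun (congrFun M.2 i) j
      have hN : (N : Matrix (Fin r) (Fin r) ℂ) j i = (N : Matrix _ _ ℂ) i j :=
        congrFun (congrFun N.2 i) j
      rw [← hM, ← hN]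
      exact congrFun h ⟨(j, i), hij⟩
  have hsurj : Function.Surjective ψ := by
    intro f
    refine ⟨⟨Matrix.of fun i j =>
      if h : i ≤ j then f ⟨(i, j), h⟩ else f ⟨(j, i), le_of_not_ge h⟩, ?_⟩, ?_⟩
    · ext i j
      simp only [Matrix.transpose_apply, Matrix.of_apply]
      by_cases h2 : i ≤ j <;> by_cases h3 : j ≤ i
      · have : i = j := le_antisymm h2 h3
        subst this; simp
      · rw [dif_neg h3, dif_pos h2]
      · rw [dif_pos h3, dif_neg h2]
      · omega
    · ext p
      obtain ⟨⟨i, j⟩, hp⟩ := p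
      simp only [ψ]
      exact dif_pos hp
  have e : symSub (Fin r) ≃ₗ[ℂ] ({p : Fin r × Fin r // p.1 ≤ p.2} → ℂ) :=
    LinearEquiv.ofBijective ψ ⟨hinj, hsurj⟩
  have hcard : Fintype.card {p : Fin r × Fin r // p.1 ≤ p.2} = ∑ j : Fin r, (j.val + 1) := by
    have e2 : {p : Fin r × Fin r // p.1 ≤ p.2} ≃ (Σ j : Fin r, Fin (j.val + 1)) :=
      { toFun := fun p => ⟨p.1.2, ⟨p.1.1.val, Nat.lt_succ_of_le p.2⟩⟩
        invFun := fun s => ⟨(⟨s.2.val, lt_of_lt_of_le s.2.isLt s.1.isLt⟩, s.1),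
          Nat.lt_succ_iff.mp s.2.isLt⟩
        left_inv := fun p => rfl
        right_inv := fun s => rfl }
    rw [Fintype.card_congr e2, Fintype.card_sigma]
    simp
  have hfin : finrank ℂ (symSub (Fin r)) = ∑ j : Fin r, (j.val + 1) := by
    rw [e.finrank_eq, Module.finrank_pi, hcard]
  rw [hfin, Fin.sum_univ_eq_sum_range (fun i => i + 1) r]
  have h1 : (∑ i ∈ Finset.range r, (i + 1)) = ∑ i ∈ Finset.range (r + 1), i := by
    rw [Finset.sum_range_succ' (fun i => i) r]; simp
  rw [h1, Finset.sum_range_id_mul_two, Nat.add_sub_cancel, Nat.mul_comm]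

end Stmt9Aux

open Stmt9Aux Submodule LinearMap Module

/-- The stabilizer `{X : X Q + Q Xᵀ = 0}` of a skew-symmetric `2n × 2n` complex
matrix `Q` of rank `2k` has dimension `k(2k+1) + 2n(2n-2k)`. -/
theorem stmt_9 (n k : ℕ) (Q : Matrix (Fin (2 * n)) (Fin (2 * n)) ℂ)
    (hskew : Qᵀ = -Q) (hrk : Q.rank = 2 * k)
    (S : Submodule ℂ (Matrix (Fin (2 * n)) (Fin (2 * n)) ℂ))
    (hS : ∀ X : Matrix (Fin (2 * n)) (Fin (2 * n)) ℂ, X ∈ S ↔ X * Q + Q * Xᵀ = 0) :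
    Module.finrank ℂ S = k * (2 * k + 1) + 2 * n * (2 * n - 2 * k) := by
  classical
  -- the linear map h : X ↦ Q * Xᵀ
  let h : Matrix (Fin (2 * n)) (Fin (2 * n)) ℂ →ₗ[ℂ] Matrix (Fin (2 * n)) (Fin (2 * n)) ℂ :=
    { toFun := fun X => Q * Xᵀ
      map_add' := fun a b => by simp [Matrix.transpose_add, Matrix.mul_add]
      map_smul' := fun c a => by simp [Matrix.transpose_smul, Matrix.mul_smul] }
  -- S is the preimage of the symmetric matrices under h
  have hSeq : S = (symSub (Fin (2 * n))).comap h := by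
    ext X
    rw [hS, Submodule.mem_comap, mem_symSub]
    show X * Q + Q * Xᵀ = 0 ↔ (Q * Xᵀ)ᵀ = Q * Xᵀ
    rw [Matrix.transpose_mul, Matrix.transpose_transpose, hskew, Matrix.mul_neg,
      ← add_eq_zero_iff_neg_eq]
  set R := LinearMap.range Q.mulVecLin with hRdef
  have hR : finrank ℂ R = 2 * k := by rw [← hrk]; rfl
  have hrn := LinearMap.finrank_range_add_finrank_ker Q.mulVecLin
  have hdim : finrank ℂ (Fin (2 * n) → ℂ) = 2 * n := by simp
  rw [hdim] at hrn
  have hkq : finrank ℂ (LinearMap.ker Q.mulVecLin) = 2 * n - 2 * k := by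
    rw [← hRdef, hR] at hrn; omega
  -- characterize membership in range h via columns
  have hrangeh : ∀ M : Matrix (Fin (2 * n)) (Fin (2 * n)) ℂ,
      (M ∈ LinearMap.range h ↔ ∀ j, (fun i => M i j) ∈ R) := by
    intro M
    constructor
    · rintro ⟨X, rfl⟩ j
      exact (exists_factor Q (Q * Xᵀ)).mp ⟨Xᵀ, rfl⟩ j
    · intro hM
      obtain ⟨C, hC⟩ := (exists_factor Q M).mpr hM
      exact ⟨Cᵀ, by show Q * Cᵀᵀ = M; rwa [Matrix.transpose_transpose]⟩
  -- dimension of the kernel of h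
  have hrow : ∀ X : Matrix (Fin (2 * n)) (Fin (2 * n)) ℂ,
      (Q * Xᵀ = 0 ↔ ∀ i, Q.mulVecLin (X i) = 0) := by
    intro X
    constructor
    · intro hX i
      funext l
      have := congrFun (congrFun hX l) i
      simpa [Matrix.mul_apply, Matrix.mulVecLin_apply, Matrix.mulVec, dotProduct] using this
    · intro hX
      ext l i
      have := congrFun (hX i) l
      simpa [Matrix.mul_apply, Matrix.mulVecLin_apply, Matrix.mulVec, dotProduct] using this
  have hkerh : finrank ℂ (LinearMap.ker h) = 2 * n * (2 * n - 2 * k) := by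
    let e : (LinearMap.ker h) ≃ₗ[ℂ] (Fin (2 * n) → LinearMap.ker Q.mulVecLin) :=
      { toFun := fun X i => ⟨fun j => X.1 i j, LinearMap.mem_ker.mpr
          (((hrow X.1).mp (LinearMap.mem_ker.mp X.2)) i)⟩
        map_add' := fun a b => rfl
        map_smul' := fun c a => rfl
        invFun := fun v => ⟨Matrix.of fun i j => (v i).1 j, LinearMap.mem_ker.mpr
          ((hrow _).mpr (fun i => LinearMap.mem_ker.mp (v i).2))⟩
        left_inv := fun X => rfl
        right_inv := fun v => rfl }
    rw [e.finrank_eq, Module.finrank_pi_fintype, Finset.sum_const, Finset.card_univ,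
      Fintype.card_fin, smul_eq_mul, hkq]
  -- basis matrix A for the column space R
  have hfd : FiniteDimensional ℂ R := inferInstance
  let b' : Basis (Fin (2 * k)) ℂ R := (Module.finBasis ℂ R).reindex (finCongr hR)
  let A : Matrix (Fin (2 * n)) (Fin (2 * k)) ℂ := Matrix.of fun i j => (b' j : Fin (2 * n) → ℂ) i
  have hA' : Aᵀ = ⇑R.subtype ∘ ⇑b' := by funext j i; rfl
  have hRA : LinearMap.range A.mulVecLin = R := by
    rw [Matrix.range_mulVecLin, show A.col = Aᵀ from rfl, hA', Set.range_comp, Submodule.span_image, Module.Basis.span_eq,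
      Submodule.map_subtype_top]
  -- a left inverse of A
  have hrkA : finrank ℂ (LinearMap.range A.mulVecLin) = 2 * k := by rw [hRA, hR]
  have hrkAT : Aᵀ.rank = 2 * k := by rw [Matrix.rank_transpose]; exact hrkA
  have hsurjAT : Function.Surjective Aᵀ.mulVecLin := by
    rw [← LinearMap.range_eq_top]
    apply Submodule.eq_top_of_finrank_eq
    rw [show finrank ℂ (LinearMap.range Aᵀ.mulVecLin) = Aᵀ.rank from rfl, hrkAT]
    simp
  have hsurjv : Function.Surjective A.vecMul := by
    intro w
    obtain ⟨v, hv⟩ := hsurjAT w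
    exact ⟨v, (Matrix.mulVec_transpose A v).symm.trans hv⟩
  obtain ⟨B, hBA⟩ := Matrix.vecMul_surjective_iff_exists_left_inverse.mp hsurjv
  have hATB : Aᵀ * Bᵀ = 1 := by rw [← Matrix.transpose_mul, hBA, Matrix.transpose_one]
  -- the map φ : N ↦ A * N * Aᵀ
  let φ : Matrix (Fin (2 * k)) (Fin (2 * k)) ℂ →ₗ[ℂ] Matrix (Fin (2 * n)) (Fin (2 * n)) ℂ :=
    { toFun := fun Nm => A * Nm * Aᵀ
      map_add' := fun a b => by show A * (a + b) * Aᵀ = A * a * Aᵀ + A * b * Aᵀ; rw [Matrix.mul_add, Matrix.add_mul]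
      map_smul' := fun c a => by simp [Matrix.mul_smul, Matrix.smul_mul] }
  have hBAN : ∀ Nm : Matrix (Fin (2 * k)) (Fin (2 * k)) ℂ, B * (A * Nm * Aᵀ) * Bᵀ = Nm := by
    intro Nm
    have : B * (A * Nm * Aᵀ) * Bᵀ = (B * A) * Nm * (Aᵀ * Bᵀ) := by simp only [← Matrix.mul_assoc]
    rw [this, hBA, hATB, Matrix.one_mul, Matrix.mul_one]
  have hφinj : Function.Injective φ := by
    intro N1 N2 hN
    have : B * (A * N1 * Aᵀ) * Bᵀ = B * (A * N2 * Aᵀ) * Bᵀ := by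
      show B * (φ N1) * Bᵀ = B * (φ N2) * Bᵀ; rw [hN]
    rwa [hBAN, hBAN] at this
  -- the intersection is the image of symmetric 2k × 2k matrices under φ
  have hset : (symSub (Fin (2 * n)) ⊓ LinearMap.range h : Submodule ℂ _)
      = Submodule.map φ (symSub (Fin (2 * k))) := by
    apply le_antisymm
    · rintro M ⟨hMsym, hMrange⟩
      replace hMsym : Mᵀ = M := hMsym
      obtain ⟨C, hC⟩ := (exists_factor A M).mpr
        (by intro j; rw [hRA]; exact (hrangeh M).mp hMrange j)
      have h1 : A * (B * M) = M := by
        rw [← hC, ← Matrix.mul_assoc B A C, hBA, Matrix.one_mul]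
      refine ⟨B * M * Bᵀ, ?_, ?_⟩
      · show (B * M * Bᵀ)ᵀ = B * M * Bᵀ
        simp only [Matrix.transpose_mul, Matrix.transpose_transpose, hMsym, Matrix.mul_assoc]
      · show A * (B * M * Bᵀ) * Aᵀ = M
        have h2 : A * (B * M * Bᵀ) * Aᵀ = (A * (B * M)) * (Bᵀ * Aᵀ) := by simp only [← Matrix.mul_assoc]
        have h3 : Bᵀ * Aᵀ = (A * B)ᵀ := (Matrix.transpose_mul A B).symm
        have h4 : ((A * B) * Mᵀ)ᵀ = M * (A * B)ᵀ := by
          rw [Matrix.transpose_mul, Matrix.transpose_transpose]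
        rw [h2, h1, h3, ← h4, hMsym, Matrix.mul_assoc A B M, h1, hMsym]
    · rintro M ⟨Nm, hNm, rfl⟩
      replace hNm : Nmᵀ = Nm := hNm
      constructor
      · show (A * Nm * Aᵀ)ᵀ = A * Nm * Aᵀ
        simp only [Matrix.transpose_mul, Matrix.transpose_transpose, hNm, Matrix.mul_assoc]
      · apply (hrangeh _).mpr
        intro j
        rw [← hRA]
        exact (exists_factor A (A * Nm * Aᵀ)).mp ⟨Nm * Aᵀ, by rw [Matrix.mul_assoc]⟩ j
  -- put everything together
  have hmap : finrank ℂ (Submodule.map φ (symSub (Fin (2 * k)))) = k * (2 * k + 1) := by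
    rw [← (Submodule.equivMapOfInjective φ hφinj (symSub (Fin (2 * k)))).finrank_eq]
    have h2 := finrank_symSub_mul_two (2 * k)
    have h3 : 2 * k * (2 * k + 1) = (k * (2 * k + 1)) * 2 := by ring
    omega
  rw [hSeq, finrank_comap_eq, hkerh, hset, hmap, Nat.add_comm]
end

section
/- Let $\dim V = 2n$ and let $Q,B$ be the block-diagonal skew-symmetric matrices with $2\times2$ blocks $\begin{pmatrix}0&\lambda_i\\-\lambda_i&0\end{pmatrix}$ and $\begin{pmatrix}0&1\\-1&0\end{pmatrix}$ respectively, where $\lambda_1,\dots,\lambda_n$ are pairwise distinct nonzero complex numbers. Then the joint stabilizer $\{X\in\mathfrak{gl}(2n,\mathbb{C}): XQ+QX^T=0,\ XB+BX^T=0\}$ has dimension $3n$. -/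
open Matrix

/-- The linear map sending a tuple of `3n` parameters to a block-diagonal
matrix with `2×2` traceless blocks. -/
private def Tmap (n : ℕ) : (Fin n × Fin 3 → ℂ) →ₗ[ℂ] Matrix (Fin n × Fin 2) (Fin n × Fin 2) ℂ where
  toFun f := Matrix.of fun p q =>
    if p.1 = q.1 then
      (if p.2 = 0 then (if q.2 = 0 then f (p.1, 0) else f (p.1, 1))
       else (if q.2 = 0 then f (p.1, 2) else - f (p.1, 0)))
    else 0
  map_add' f g := by
    ext p q
    simp only [Matrix.add_apply, Matrix.of_apply, Pi.add_apply]
    split_ifs <;> ring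
  map_smul' c f := by
    ext p q
    simp only [Matrix.smul_apply, Matrix.of_apply, Pi.smul_apply, RingHom.id_apply, smul_eq_mul]
    split_ifs <;> ring

private lemma mul_entry {n : ℕ} (M X : Matrix (Fin n × Fin 2) (Fin n × Fin 2) ℂ)
    (hM : ∀ p q : Fin n × Fin 2, p.1 ≠ q.1 → M p q = 0)
    (i j : Fin n) (a b : Fin 2) :
    (X * M) (i, a) (j, b) = X (i,a) (j,0) * M (j,0) (j,b) + X (i,a) (j,1) * M (j,1) (j,b) := by
  rw [Matrix.mul_apply, Fintype.sum_prod_type]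
  rw [Finset.sum_eq_single j]
  · rw [Fin.sum_univ_two]
  · intro k _ hk
    apply Finset.sum_eq_zero
    intro c _
    rw [hM (k, c) (j, b) hk, mul_zero]
  · intro h; exact absurd (Finset.mem_univ j) h

private lemma mulT_entry {n : ℕ} (M X : Matrix (Fin n × Fin 2) (Fin n × Fin 2) ℂ)
    (hM : ∀ p q : Fin n × Fin 2, p.1 ≠ q.1 → M p q = 0)
    (i j : Fin n) (a b : Fin 2) :
    (M * Xᵀ) (i, a) (j, b) = M (i,a) (i,0) * X (j,b) (i,0) + M (i,a) (i,1) * X (j,b) (i,1) := by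
  rw [Matrix.mul_apply, Fintype.sum_prod_type]
  rw [Finset.sum_eq_single i]
  · rw [Fin.sum_univ_two]; rfl
  · intro k _ hk
    apply Finset.sum_eq_zero
    intro c _
    rw [hM (i, a) (k, c) (Ne.symm hk), zero_mul]
  · intro h; exact absurd (Finset.mem_univ i) h

/-- For the block-diagonal skew forms `Q` (blocks `[[0, λᵢ], [-λᵢ, 0]]`) and `B`
(blocks `[[0, 1], [-1, 0]]`) on a `2n`-dimensional space, with the `λᵢ` pairwise
distinct and nonzero, the joint stabilizer
`{X : X Q + Q Xᵀ = 0, X B + B Xᵀ = 0}` has dimension `3n`. -/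
theorem stmt_12 (n : ℕ) (lam : Fin n → ℂ) (hinj : Function.Injective lam)
    (hne : ∀ i, lam i ≠ 0)
    (Q B : Matrix (Fin n × Fin 2) (Fin n × Fin 2) ℂ)
    (hQ : ∀ p q : Fin n × Fin 2, Q p q =
      if p.1 = q.1 then
        (if p.2 = 0 ∧ q.2 = 1 then lam p.1
         else if p.2 = 1 ∧ q.2 = 0 then -lam p.1 else 0)
      else 0)
    (hB : ∀ p q : Fin n × Fin 2, B p q =
      if p.1 = q.1 then
        (if p.2 = 0 ∧ q.2 = 1 then (1 : ℂ)
         else if p.2 = 1 ∧ q.2 = 0 then -1 else 0)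
      else 0)
    (S : Submodule ℂ (Matrix (Fin n × Fin 2) (Fin n × Fin 2) ℂ))
    (hS : ∀ X, X ∈ S ↔ (X * Q + Q * Xᵀ = 0 ∧ X * B + B * Xᵀ = 0)) :
    Module.finrank ℂ S = 3 * n := by
  have hQ0 : ∀ p q : Fin n × Fin 2, p.1 ≠ q.1 → Q p q = 0 := by
    intro p q h; rw [hQ]; simp [h]
  have hB0 : ∀ p q : Fin n × Fin 2, p.1 ≠ q.1 → B p q = 0 := by
    intro p q h; rw [hB]; simp [h]
  -- entry values of Q and B within a diagonal block
  have hQe : ∀ (j : Fin n) (a b : Fin 2), Q (j, a) (j, b) =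
      (if a = 0 ∧ b = 1 then lam j else if a = 1 ∧ b = 0 then -lam j else 0) := by
    intro j a b; rw [hQ]; simp
  have hBe : ∀ (j : Fin n) (a b : Fin 2), B (j, a) (j, b) =
      (if a = 0 ∧ b = 1 then (1:ℂ) else if a = 1 ∧ b = 0 then -1 else 0) := by
    intro j a b; rw [hB]; simp
  -- S is the range of Tmap n
  have hrange : LinearMap.range (Tmap n) = S := by
    ext X
    constructor
    · rintro ⟨f, rfl⟩
      rw [hS]
      constructor
      · ext ⟨i, a⟩ ⟨j, b⟩
        rw [Matrix.add_apply, Matrix.zero_apply, mul_entry Q _ hQ0, mulT_entry Q _ hQ0,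
          hQe, hQe, hQe, hQe]
        simp only [Tmap, LinearMap.coe_mk, AddHom.coe_mk, Matrix.of_apply]
        by_cases hij : i = j
        · subst hij
          fin_cases a <;> fin_cases b <;> simp <;> ring
        · fin_cases a <;> fin_cases b <;> simp [hij, Ne.symm hij]
      · ext ⟨i, a⟩ ⟨j, b⟩
        rw [Matrix.add_apply, Matrix.zero_apply, mul_entry B _ hB0, mulT_entry B _ hB0,
          hBe, hBe, hBe, hBe]
        simp only [Tmap, LinearMap.coe_mk, AddHom.coe_mk, Matrix.of_apply]
        by_cases hij : i = j
        · subst hij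
          fin_cases a <;> fin_cases b <;> simp <;> ring
        · fin_cases a <;> fin_cases b <;> simp [hij, Ne.symm hij]
    · intro hX
      rw [hS] at hX
      obtain ⟨hXQ, hXB⟩ := hX
      -- entrywise equations
      have EQ : ∀ (i j : Fin n) (a b : Fin 2),
          X (i,a) (j,0) * Q (j,0) (j,b) + X (i,a) (j,1) * Q (j,1) (j,b)
          + (Q (i,a) (i,0) * X (j,b) (i,0) + Q (i,a) (i,1) * X (j,b) (i,1)) = 0 := by
        intro i j a b
        have := congrArg (fun M => M (i, a) (j, b)) hXQ
        simpa [Matrix.add_apply, mul_entry Q X hQ0 i j a b, mulT_entry Q X hQ0 i j a b]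
          using this
      have EB : ∀ (i j : Fin n) (a b : Fin 2),
          X (i,a) (j,0) * B (j,0) (j,b) + X (i,a) (j,1) * B (j,1) (j,b)
          + (B (i,a) (i,0) * X (j,b) (i,0) + B (i,a) (i,1) * X (j,b) (i,1)) = 0 := by
        intro i j a b
        have := congrArg (fun M => M (i, a) (j, b)) hXB
        simpa [Matrix.add_apply, mul_entry B X hB0 i j a b, mulT_entry B X hB0 i j a b]
          using this
      -- trace condition on diagonal blocks
      have htr : ∀ i : Fin n, X (i,1) (i,1) = - X (i,0) (i,0) := by
        intro i
        have h := EB i i 0 1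
        simp only [hBe] at h
        simp at h
        linear_combination h
      -- off-diagonal blocks vanish
      have hoff : ∀ (i j : Fin n), i ≠ j → ∀ a b : Fin 2, X (i, a) (j, b) = 0 := by
        intro i j hij a b
        have hl : lam j - lam i ≠ 0 := by
          intro h
          exact hij (hinj (sub_eq_zero.mp h)).symm
        fin_cases a <;> fin_cases b
        · -- entry (0,0): use equations (a,b) = (0,1)
          have h1 := EQ i j 0 1
          have h2 := EB i j 0 1
          simp only [hQe] at h1
          simp only [hBe] at h2
          simp at h1 h2
          have key : (lam j - lam i) * X (i, 0) (j, 0) = 0 := by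
            linear_combination h1 - lam i * h2
          simpa using (mul_eq_zero.mp key).resolve_left hl
        · -- entry (0,1): use equations (a,b) = (0,0)
          have h1 := EQ i j 0 0
          have h2 := EB i j 0 0
          simp only [hQe] at h1
          simp only [hBe] at h2
          simp at h1 h2
          have key : (lam j - lam i) * X (i, 0) (j, 1) = 0 := by
            linear_combination -h1 + lam i * h2
          simpa using (mul_eq_zero.mp key).resolve_left hl
        · -- entry (1,0): use equations (a,b) = (1,1)
          have h1 := EQ i j 1 1
          have h2 := EB i j 1 1
          simp only [hQe] at h1
          simp only [hBe] at h2
          simp at h1 h2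
          have key : (lam j - lam i) * X (i, 1) (j, 0) = 0 := by
            linear_combination h1 - lam i * h2
          simpa using (mul_eq_zero.mp key).resolve_left hl
        · -- entry (1,1): use equations (a,b) = (1,0)
          have h1 := EQ i j 1 0
          have h2 := EB i j 1 0
          simp only [hQe] at h1
          simp only [hBe] at h2
          simp at h1 h2
          have key : (lam j - lam i) * X (i, 1) (j, 1) = 0 := by
            linear_combination -h1 + lam i * h2
          simpa using (mul_eq_zero.mp key).resolve_left hl
      refine ⟨fun p => if p.2 = 0 then X (p.1, 0) (p.1, 0)
        else if p.2 = 1 then X (p.1, 0) (p.1, 1) else X (p.1, 1) (p.1, 0), ?_⟩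
      ext ⟨i, a⟩ ⟨j, b⟩
      simp only [Tmap, LinearMap.coe_mk, AddHom.coe_mk, Matrix.of_apply]
      by_cases hij : i = j
      · subst hij
        fin_cases a <;> fin_cases b <;> simp [htr i]
      · simp [hij, hoff i j hij a b]
  -- injectivity of Tmap
  have hTinj : Function.Injective (Tmap n) := by
    rw [← LinearMap.ker_eq_bot]
    rw [LinearMap.ker_eq_bot']
    intro f hf
    funext ⟨i, m⟩
    fin_cases m
    · have := congrArg (fun M => M (i, 0) (i, 0)) hf
      simpa [Tmap] using this
    · have := congrArg (fun M => M (i, 0) (i, 1)) hf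
      simpa [Tmap] using this
    · have := congrArg (fun M => M (i, 1) (i, 0)) hf
      simpa [Tmap] using this
  rw [← hrange, LinearMap.finrank_range_of_inj hTinj, Module.finrank_pi,
    Fintype.card_prod, Fintype.card_fin, Fintype.card_fin, Nat.mul_comm]
end

section
/- Let $U\subseteq V$ be a linear subspace of a finite-dimensional complex vector space $V$ with $\dim U = k$. Then for a generic linear map $A:V\to V$ (i.e., for all $A$ in a nonempty Zariski-open subset of $\operatorname{End}(V)$), one has $\dim(U + A(U) + \dots + A^q(U)) = \min((q+1)k, \dim V)$ for each fixed $q\ge 0$. -/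
open Matrix Submodule Set

lemma aux_mod_image (N d : ℕ) (hd : 0 < d) :
    (Finset.range N).image (· % d) = Finset.range (min N d) := by
  ext m
  simp only [Finset.mem_image, Finset.mem_range]
  constructor
  · rintro ⟨a, ha, rfl⟩
    have h1 := Nat.mod_lt a hd
    have h2 := Nat.mod_le a d
    omega
  · intro hm
    exact ⟨m, by omega, Nat.mod_eq_of_lt (by omega)⟩

lemma aux_indep_subfamily {ι : Type*} {M : Type*} [AddCommGroup M] [Module ℂ M]
    [FiniteDimensional ℂ M] (w : ι → M) :
    ∃ g : Fin (Module.finrank ℂ (span ℂ (Set.range w))) → ι,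
      LinearIndependent ℂ (w ∘ g) ∧
      span ℂ (Set.range (w ∘ g)) = span ℂ (Set.range w) := by
  obtain ⟨b, hsub, hspan, hli⟩ := exists_linearIndependent ℂ (Set.range w)
  have hbfin : b.Finite := LinearIndependent.setFinite hli
  haveI : Fintype b := hbfin.fintype
  have hcard : Fintype.card b = Module.finrank ℂ (span ℂ (Set.range w)) := by
    rw [← hspan, finrank_span_set_eq_card hli, Set.toFinset_card]
  let e : Fin (Module.finrank ℂ (span ℂ (Set.range w))) ≃ b :=
    (Fintype.equivFinOfCardEq hcard).symm
  have hchoice : ∀ i, ∃ t, w t = (e i : M) := fun i => hsub (e i).2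
  choose g hg using hchoice
  have hwg : w ∘ g = (fun x : b => (x : M)) ∘ e := funext fun i => hg i
  refine ⟨g, ?_, ?_⟩
  · rw [hwg]; exact hli.comp e e.injective
  · rw [hwg, Set.range_comp, e.range_eq_univ, Set.image_univ, Subtype.range_coe, hspan]

/-- For a subspace `U ⊆ ℂᵈ` of dimension `k` and fixed `q`, a generic endomorphism
`A` (all `A` in the nonvanishing locus of some nonzero polynomial in the matrix
entries — a nonempty Zariski-open set) satisfies
`dim (U + A(U) + ⋯ + A^q(U)) = min ((q+1) k, d)`. -/
theorem stmt_13 (d k q : ℕ) (U : Submodule ℂ (Fin d → ℂ))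
    (hU : Module.finrank ℂ U = k) :
    ∃ P : MvPolynomial (Fin d × Fin d) ℂ, P ≠ 0 ∧
      ∀ A : Matrix (Fin d) (Fin d) ℂ,
        MvPolynomial.eval (fun p => A p.1 p.2) P ≠ 0 →
        Module.finrank ℂ
          ↥(⨆ j : Fin (q + 1), Submodule.map (Matrix.toLin' (A ^ (j : ℕ))) U)
          = min ((q + 1) * k) d := by
  rcases Nat.eq_zero_or_pos d with hd | hd
  · subst hd
    refine ⟨1, one_ne_zero, fun A _ => ?_⟩
    haveI : Subsingleton (Fin 0 → ℂ) := ⟨fun a b => funext fun i => absurd i.2 (by omega)⟩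
    rw [Module.finrank_zero_of_subsingleton]
    omega
  -- basic bounds
  have hk : k ≤ d := by
    rw [← hU]
    exact (Submodule.finrank_le U).trans_eq (Module.finrank_fin_fun (R := ℂ) (n := d))
  -- basis of U and the family u
  let bU : Module.Basis (Fin k) ℂ U := Module.finBasisOfFinrankEq ℂ U hU
  let u : Fin k → (Fin d → ℂ) := fun l => (bU l : Fin d → ℂ)
  have hUspan : U = span ℂ (Set.range u) := by
    have := bU.span_eq
    apply_fun Submodule.map U.subtype at this
    rw [Submodule.map_span, Submodule.map_top, Submodule.range_subtype] at this
    rw [← this, ← Set.range_comp]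
    rfl
  -- column family
  let colfam : Matrix (Fin d) (Fin d) ℂ → (Fin (q + 1) × Fin k) → (Fin d → ℂ) :=
    fun A p => (A ^ (p.1 : ℕ)) *ᵥ u p.2
  have hsup : ∀ A : Matrix (Fin d) (Fin d) ℂ,
      (⨆ j : Fin (q + 1), Submodule.map (Matrix.toLin' (A ^ (j : ℕ))) U)
        = span ℂ (Set.range (colfam A)) := by
    intro A
    conv_lhs => rw [hUspan]
    have h1 : ∀ j : Fin (q + 1),
        Submodule.map (Matrix.toLin' (A ^ (j : ℕ))) (span ℂ (Set.range u))
          = span ℂ (Set.range fun l => colfam A (j, l)) := by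
      intro j
      rw [Submodule.map_span, ← Set.range_comp]
      congr 1
    rw [iSup_congr h1, ← Submodule.span_iUnion]
    congr 1
    ext x
    simp only [Set.mem_iUnion, Set.mem_range, Prod.exists]
  -- upper bound for any A
  have hub : ∀ A : Matrix (Fin d) (Fin d) ℂ,
      Module.finrank ℂ (span ℂ (Set.range (colfam A))) ≤ min ((q + 1) * k) d := by
    intro A
    refine le_min ?_ ?_
    · calc Module.finrank ℂ (span ℂ (Set.range (colfam A)))
          ≤ Fintype.card (Fin (q + 1) × Fin k) := finrank_range_le_card (colfam A)
        _ = (q + 1) * k := by simp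
    · exact (Submodule.finrank_le _).trans_eq (Module.finrank_fin_fun (R := ℂ))
  -- construction of the witness A₀
  -- basis of a complement
  obtain ⟨W, hW⟩ := Submodule.exists_isCompl U
  have hWrank : Module.finrank ℂ W = d - k := by
    have h1 := Submodule.finrank_add_eq_of_isCompl hW
    rw [hU, Module.finrank_fin_fun (R := ℂ)] at h1
    omega
  let c : Module.Basis (Fin (d - k)) ℂ W := Module.finBasisOfFinrankEq ℂ W hWrank
  have hkd : k + (d - k) = d := by omega
  let v : Module.Basis (Fin d) ℂ (Fin d → ℂ) :=
    (((bU.prod c).map (Submodule.prodEquivOfIsCompl U W hW)).reindex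
      (finSumFinEquiv.trans (finCongr hkd)))
  have hv : ∀ l : Fin k, v (Fin.castLE hk l) = u l := by
    intro l
    have he : (finSumFinEquiv.trans (finCongr hkd)) (Sum.inl l) = Fin.castLE hk l := by
      apply Fin.ext; simp
    rw [Module.Basis.reindex_apply, ← he, Equiv.symm_apply_apply, Module.Basis.map_apply]
    rw [Submodule.coe_prodEquivOfIsCompl']
    have h1 : ((bU.prod c) (Sum.inl l)).1 = bU l := bU.prod_apply_inl_fst c l
    have h2 : ((bU.prod c) (Sum.inl l)).2 = 0 := bU.prod_apply_inl_snd c l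
    rw [h1, h2]
    simp [u]
  -- the shift map and witness endomorphism
  let shift : Fin d → Fin d := fun i => ⟨(i + k) % d, Nat.mod_lt _ hd⟩
  have hshift_iter : ∀ (j : ℕ) (i : Fin d), (shift^[j] i : ℕ) = (i + j * k) % d := by
    intro j
    induction j with
    | zero => intro i; simp [Nat.mod_eq_of_lt i.isLt]
    | succ n ih =>
      intro i
      rw [Function.iterate_succ_apply, ih]
      show ((((i : ℕ) + k) % d) + n * k) % d = _
      rw [Nat.mod_add_mod]
      congr 1
      ring
  let f : (Fin d → ℂ) →ₗ[ℂ] (Fin d → ℂ) := v.constr ℂ (fun i => v (shift i))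
  have hf : ∀ i, f (v i) = v (shift i) := fun i => v.constr_basis ℂ _ i
  have hfiter : ∀ (j : ℕ) (i : Fin d), (f ^ j) (v i) = v (shift^[j] i) := by
    intro j
    induction j with
    | zero => intro i; simp
    | succ n ih =>
      intro i
      rw [pow_succ', Module.End.mul_apply, ih, hf]
      rw [← Function.iterate_succ_apply' shift n i]
  let A₀ : Matrix (Fin d) (Fin d) ℂ := LinearMap.toMatrix' f
  have hA₀pow : ∀ n : ℕ, Matrix.toLin' (A₀ ^ n) = f ^ n := by
    intro n
    induction n with
    | zero => rw [pow_zero, pow_zero, Matrix.toLin'_one]; rfl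
    | succ m ih =>
      rw [pow_succ, pow_succ, Matrix.toLin'_mul, ih, Matrix.toLin'_toMatrix']
      rfl
  -- the index map h
  let hmap : (Fin (q + 1) × Fin k) → Fin d :=
    fun p => ⟨((p.2 : ℕ) + (p.1 : ℕ) * k) % d, Nat.mod_lt _ hd⟩
  have hcol₀ : ∀ p, colfam A₀ p = v (hmap p) := by
    rintro ⟨j, l⟩
    show (A₀ ^ (j : ℕ)) *ᵥ u l = _
    rw [← Matrix.toLin'_apply, hA₀pow, ← hv l, hfiter]
    congr 1
    apply Fin.ext
    rw [hshift_iter]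
    rfl
  -- dimension at the witness
  have hcard : Fintype.card (Set.range hmap) = min ((q + 1) * k) d := by
    classical
    have h1 : (Set.range hmap).toFinset = Finset.univ.image hmap := Set.toFinset_range hmap
    have h2 : (Finset.univ.image hmap).image (Fin.val) =
        (Finset.range ((q + 1) * k)).image (· % d) := by
      ext m
      simp only [Finset.mem_image, Finset.mem_range, Finset.mem_univ, true_and]
      constructor
      · rintro ⟨i, ⟨p, rfl⟩, rfl⟩
        refine ⟨(p.2 : ℕ) + (p.1 : ℕ) * k, ?_, rfl⟩
        have h3 := p.1.isLt
        have h4 := p.2.isLt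
        calc (p.2 : ℕ) + (p.1 : ℕ) * k < k + (p.1 : ℕ) * k := by omega
          _ ≤ k + q * k := by
              have : (p.1 : ℕ) * k ≤ q * k := Nat.mul_le_mul_right k (by omega)
              omega
          _ = (q + 1) * k := by ring
      · rintro ⟨a, ha, rfl⟩
        have hk0 : 0 < k := by
          rcases Nat.eq_zero_or_pos k with h | h
          · rw [h, Nat.mul_zero] at ha; omega
          · exact h
        refine ⟨hmap (⟨a / k, ?_⟩, ⟨a % k, Nat.mod_lt _ hk0⟩), ⟨_, rfl⟩, ?_⟩
        · exact (Nat.div_lt_iff_lt_mul hk0).mpr ha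
        · show (a % k + a / k * k) % d = a % d
          rw [Nat.mod_add_div']
    have h5 : ((Finset.univ.image hmap).image (Fin.val)).card
        = (Finset.univ.image hmap).card :=
      Finset.card_image_of_injective _ Fin.val_injective
    rw [← Set.toFinset_card, h1]
    rw [h2] at h5
    rw [aux_mod_image _ _ hd, Finset.card_range] at h5
    omega
  have hdim₀ : Module.finrank ℂ (span ℂ (Set.range (colfam A₀))) = min ((q + 1) * k) d := by
    classical
    have hr : Set.range (colfam A₀) = Set.range (fun x : Set.range hmap => v (x : Fin d)) := by
      rw [show colfam A₀ = ⇑v ∘ hmap from funext hcol₀, Set.range_comp, Set.image_eq_range]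
    have hli : LinearIndependent ℂ (fun x : Set.range hmap => v (x : Fin d)) :=
      v.linearIndependent.comp _ Subtype.val_injective
    rw [hr, finrank_span_eq_card hli, hcard]
  -- choose independent columns at the witness
  obtain ⟨g, hgli, -⟩ := aux_indep_subfamily (colfam A₀)
  let γ : Fin (min ((q + 1) * k) d) → Fin (q + 1) × Fin k := g ∘ (finCongr hdim₀.symm)
  have hγli : LinearIndependent ℂ (colfam A₀ ∘ γ) :=
    hgli.comp (finCongr hdim₀.symm) (finCongr hdim₀.symm).injective
  -- the d × r matrix of chosen columns
  let M₀ : Matrix (Fin d) (Fin (min ((q + 1) * k) d)) ℂ :=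
    Matrix.of fun i j => colfam A₀ (γ j) i
  have hrowdim : Module.finrank ℂ (span ℂ (Set.range (fun i : Fin d => M₀ i)))
      = min ((q + 1) * k) d := by
    have h6 : span ℂ (Set.range (fun i : Fin d => M₀ i))
        = LinearMap.range (M₀ᵀ).mulVecLin := by
      rw [Matrix.range_mulVecLin]; rfl
    have h7 : Module.finrank ℂ (LinearMap.range (M₀ᵀ).mulVecLin) = (M₀ᵀ).rank := rfl
    rw [h6, h7, Matrix.rank_transpose, Matrix.rank_eq_finrank_span_cols]
    have h8 : Set.range M₀.col = Set.range (colfam A₀ ∘ γ) := rfl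
    rw [h8, finrank_span_eq_card hγli, Fintype.card_fin]
  obtain ⟨g2, hg2li, -⟩ := aux_indep_subfamily (fun i : Fin d => M₀ i)
  let ρ : Fin (min ((q + 1) * k) d) → Fin d := g2 ∘ (finCongr hrowdim.symm)
  have hρli : LinearIndependent ℂ ((fun i : Fin d => M₀ i) ∘ ρ) :=
    hg2li.comp (finCongr hrowdim.symm) (finCongr hrowdim.symm).injective
  have hdetQ : (M₀.submatrix ρ id).det ≠ 0 := by
    have hQ : IsUnit (M₀.submatrix ρ id) := by
      rw [← Matrix.linearIndependent_rows_iff_isUnit]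
      exact hρli
    exact ((Matrix.isUnit_iff_isUnit_det _).mp hQ).ne_zero
  -- the polynomial
  let Xm : Matrix (Fin d) (Fin d) (MvPolynomial (Fin d × Fin d) ℂ) :=
    Matrix.of fun i j => MvPolynomial.X (i, j)
  let KP : Matrix (Fin d) (Fin (q + 1) × Fin k) (MvPolynomial (Fin d × Fin d) ℂ) :=
    Matrix.of fun i p => ((Xm ^ (p.1 : ℕ)) *ᵥ fun t => MvPolynomial.C (u p.2 t)) i
  have key : ∀ A : Matrix (Fin d) (Fin d) ℂ,
        MvPolynomial.eval (fun p => A p.1 p.2) (KP.submatrix ρ γ).det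
          = ((Matrix.of fun i p => colfam A p i).submatrix ρ γ).det := by
      intro A
      set φ : MvPolynomial (Fin d × Fin d) ℂ →+* ℂ :=
        (MvPolynomial.eval (fun p => A p.1 p.2)) with hφ
      have hmapX : Xm.map ⇑φ = A := by
        ext i j
        simp [Xm, hφ]
      have hpow : ∀ n : ℕ, (Xm ^ n).map ⇑φ = A ^ n := by
        intro n
        have := map_pow (φ.mapMatrix) Xm n
        simp only [RingHom.mapMatrix_apply] at this
        rw [this, hmapX]
      have hK : KP.map ⇑φ = Matrix.of fun i p => colfam A p i := by
        ext i p
        show φ (((Xm ^ (p.1 : ℕ)) *ᵥ fun t => MvPolynomial.C (u p.2 t)) i)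
          = ((A ^ (p.1 : ℕ)) *ᵥ u p.2) i
        simp only [Matrix.mulVec, dotProduct, map_sum, _root_.map_mul]
        refine Finset.sum_congr rfl fun t _ => ?_
        rw [← hpow (p.1 : ℕ)]
        simp [Matrix.map_apply, hφ]
      show φ (KP.submatrix ρ γ).det = _
      rw [RingHom.map_det]
      congr 1
      rw [RingHom.mapMatrix_apply, ← Matrix.submatrix_map, hK]
  refine ⟨(KP.submatrix ρ γ).det, ?_, ?_⟩
  · -- P ≠ 0
    intro h0
    apply hdetQ
    have h9 := key A₀
    rw [h0, map_zero] at h9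
    exact h9.symm
  · -- generic A
    intro A hA
    rw [hsup A]
    refine le_antisymm (hub A) ?_
    rw [key A] at hA
    have hS : IsUnit ((Matrix.of fun i p => colfam A p i).submatrix ρ γ) :=
      (Matrix.isUnit_iff_isUnit_det _).mpr (isUnit_iff_ne_zero.mpr hA)
    have hcols : LinearIndependent ℂ
        (fun j => ((Matrix.of fun i p => colfam A p i).submatrix ρ γ)ᵀ j) :=
      Matrix.linearIndependent_cols_iff_isUnit.mpr hS
    have hli2 : LinearIndependent ℂ (colfam A ∘ γ) :=
      LinearIndependent.of_comp (LinearMap.funLeft ℂ ℂ ρ) hcols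
    calc min ((q + 1) * k) d
        = Module.finrank ℂ (span ℂ (Set.range (colfam A ∘ γ))) := by
          rw [finrank_span_eq_card hli2, Fintype.card_fin]
      _ ≤ Module.finrank ℂ (span ℂ (Set.range (colfam A))) :=
          Submodule.finrank_mono (span_mono (Set.range_comp_subset_range γ (colfam A)))
end
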